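/- (Lemma 4, 'Lemma 13') Let B ≥ 1, ρ ∈ [0,1], and let O be a duplicate-free list of products with |O| ≤ B that maximizes f among all duplicate-free lists of length at most B, with f(O) > 0. Then there exists a pair (𝒮, y) feasible for problem P.A.1 — i.e., y ∉ 𝒮, Π_{i∈𝒮} θ_i ≥ ρ, and |𝒮| < B — such that g(𝒮 ∪ {y}) ≥ (1 − ρ) f(O). Consequently the optimal value of P.A.1 is at least (1 − ρ) f(O). -/

import Mathlib

/-- MNL expected revenue of a finite set `S` of products, where product `i`
has revenue `α i` and preference weight `β i`. -/
noncomputable def g (α β : ℕ → ℝ) (S : Finset ℕ) : ℝ :=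
  (∑ i ∈ S, α i * β i) / ((∑ i ∈ S, β i) + 1)

/-- Reachability of (0-based) position `t` of the sequence `S` under the
cascade browse model: the product of the continuation probabilities of all
earlier products. -/
noncomputable def reach (θ : ℕ → ℝ) (S : List ℕ) (t : ℕ) : ℝ :=
  ∏ j ∈ Finset.range t, θ (S.getD j 0)

/-- Expected revenue of a sequence of products `S` under the cascade browse
model combined with the MNL choice model. -/
noncomputable def f (α β θ : ℕ → ℝ) (S : List ℕ) : ℝ :=
  (∑ t ∈ Finset.range (S.length - 1),
      reach θ S t * (1 - θ (S.getD t 0)) * g α β (S.take (t + 1)).toFinset)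
    + reach θ S (S.length - 1) * g α β S.toFinset

/-!
Keeping track of the set `A` of products already viewed, the cascade revenue satisfies a one-step
recursion (`cascadeRevenue`). Two facts then follow by induction on the list: the revenue of a
nonempty list is a convex combination of MNL revenues of its nonempty prefixes, and, since `g` is
subadditive, `f (L₁ ++ L₂) ≤ f L₁ + Θ(L₁) f L₂`. Cut `O = L₁ ++ L₂` where the reachability first
drops below `ρ`, so that the last product of `L₁` is reached with probability at least `ρ` and
`Θ(L₁) < ρ` unless `L₂ = []`. Optimality of `O` gives `Θ(L₁) f L₂ ≤ ρ f O`, hence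
`(1 - ρ) f O ≤ f L₁ ≤ g (S ∪ {y})` for a prefix `S ++ [y]` of `L₁`, and `S` is still reached with
probability at least `ρ`.
-/

open Finset

section MNL

variable {α β : ℕ → ℝ}

lemma g_union_le (hα : ∀ i, 0 ≤ α i) (hβ : ∀ i, 0 ≤ β i) (A A' : Finset ℕ) :
    g α β (A ∪ A') ≤ g α β A + g α β A' := by
  have hnum : ∀ C : Finset ℕ, 0 ≤ ∑ i ∈ C, α i * β i := fun C =>
    sum_nonneg fun i _ => mul_nonneg (hα i) (hβ i)
  have hpos : ∀ C : Finset ℕ, 0 < ∑ i ∈ C, β i + 1 := fun C =>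
    add_pos_of_nonneg_of_pos (sum_nonneg fun i _ => hβ i) one_pos
  have hden : ∀ C ⊆ A ∪ A', ∑ i ∈ C, β i + 1 ≤ ∑ i ∈ A ∪ A', β i + 1 := fun C hC => by
    gcongr ?_ + 1; exact sum_le_sum_of_subset_of_nonneg hC fun i _ _ => hβ i
  have hsub : ∑ i ∈ A ∪ A', α i * β i ≤ ∑ i ∈ A, α i * β i + ∑ i ∈ A', α i * β i := by
    linarith [sum_union_inter (s₁ := A) (s₂ := A') (f := fun i => α i * β i), hnum (A ∩ A')]
  calc g α β (A ∪ A')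
      ≤ (∑ i ∈ A, α i * β i) / (∑ i ∈ A ∪ A', β i + 1)
        + (∑ i ∈ A', α i * β i) / (∑ i ∈ A ∪ A', β i + 1) := by
        rw [← add_div]; exact div_le_div_of_nonneg_right hsub (hpos _).le
    _ ≤ g α β A + g α β A' :=
        add_le_add (div_le_div_of_nonneg_left (hnum A) (hpos A) (hden A subset_union_left))
          (div_le_div_of_nonneg_left (hnum A') (hpos A') (hden A' subset_union_right))

end MNL

section Cascade

variable (α β θ : ℕ → ℝ)

/-- Expected revenue of showing the sequence `L` to a customer who has already viewed the
products in `A` and is still browsing. -/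
noncomputable def cascadeRevenue : Finset ℕ → List ℕ → ℝ
  | A, [] => g α β A
  | A, s :: L => (1 - θ s) * g α β (insert s A) + θ s * cascadeRevenue (insert s A) L

lemma reach_cons_succ (s : ℕ) (L : List ℕ) (t : ℕ) :
    reach θ (s :: L) (t + 1) = θ s * reach θ L t := by
  simp [reach, prod_range_succ']
  ring

lemma reach_zero (L : List ℕ) : reach θ L 0 = 1 := prod_range_zero _

lemma reach_succ (L : List ℕ) (t : ℕ) :
    reach θ L (t + 1) = reach θ L t * θ (L.getD t 0) := prod_range_succ _ _

lemma cascadeRevenue_eq_sum (A : Finset ℕ) (L : List ℕ) :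
    cascadeRevenue α β θ A L
      = ∑ t ∈ range L.length,
          reach θ L t * (1 - θ (L.getD t 0)) * g α β (A ∪ (L.take (t + 1)).toFinset)
        + reach θ L L.length * g α β (A ∪ L.toFinset) := by
  induction L generalizing A with
  | nil => simp [cascadeRevenue, reach]
  | cons s L ih =>
    simp only [cascadeRevenue, ih, List.length_cons, sum_range_succ', reach_cons_succ,
      List.getD_cons_succ, List.take_succ_cons, List.toFinset_cons, union_insert, insert_union]
    simp only [reach_zero, List.getD_cons_zero, List.take_zero, List.toFinset_nil, union_empty,
      one_mul, mul_add, mul_sum, mul_assoc]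
    ring

lemma f_eq_cascadeRevenue (L : List ℕ) : f α β θ L = cascadeRevenue α β θ ∅ L := by
  rw [cascadeRevenue_eq_sum]
  cases hn : L.length with
  | zero => simp [List.length_eq_zero_iff.mp hn, f, reach, g]
  | succ n =>
    rw [f, hn, Nat.add_sub_cancel, sum_range_succ, List.take_of_length_le hn.le,
      reach_succ]
    simp only [empty_union]
    ring

end Cascade

section CascadeBounds

variable {α β θ : ℕ → ℝ}

lemma cascadeRevenue_union_le (hα : ∀ i, 0 ≤ α i) (hβ : ∀ i, 0 ≤ β i)
    (hθ : ∀ i, 0 ≤ θ i ∧ θ i ≤ 1) (A A' : Finset ℕ) (L : List ℕ) :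
    cascadeRevenue α β θ (A ∪ A') L ≤ g α β A + cascadeRevenue α β θ A' L := by
  induction L generalizing A' with
  | nil => exact g_union_le hα hβ A A'
  | cons s L ih =>
    have h₀ := (hθ s).1
    have h₁ : 0 ≤ 1 - θ s := sub_nonneg.mpr (hθ s).2
    simp only [cascadeRevenue, ← union_insert]
    calc (1 - θ s) * g α β (A ∪ insert s A') + θ s * cascadeRevenue α β θ (A ∪ insert s A') L
        ≤ (1 - θ s) * (g α β A + g α β (insert s A'))
          + θ s * (g α β A + cascadeRevenue α β θ (insert s A') L) := by
          gcongr
          · exact g_union_le hα hβ A _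
          · exact ih _
      _ = _ := by ring

lemma cascadeRevenue_append_le (hα : ∀ i, 0 ≤ α i) (hβ : ∀ i, 0 ≤ β i)
    (hθ : ∀ i, 0 ≤ θ i ∧ θ i ≤ 1) (A : Finset ℕ) (L₁ L₂ : List ℕ) :
    cascadeRevenue α β θ A (L₁ ++ L₂)
      ≤ cascadeRevenue α β θ A L₁ + (L₁.map θ).prod * cascadeRevenue α β θ ∅ L₂ := by
  induction L₁ generalizing A with
  | nil => simpa [cascadeRevenue] using cascadeRevenue_union_le hα hβ hθ A ∅ L₂
  | cons s L₁ ih =>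
    have h₀ := (hθ s).1
    simp only [List.cons_append, cascadeRevenue, List.map_cons, List.prod_cons]
    calc (1 - θ s) * g α β (insert s A) + θ s * cascadeRevenue α β θ (insert s A) (L₁ ++ L₂)
        ≤ (1 - θ s) * g α β (insert s A) + θ s * (cascadeRevenue α β θ (insert s A) L₁
          + (L₁.map θ).prod * cascadeRevenue α β θ ∅ L₂) := by
          gcongr; exact ih _
      _ = _ := by ring

lemma exists_prefix_cascadeRevenue_le (hθ : ∀ i, 0 ≤ θ i ∧ θ i ≤ 1) (A : Finset ℕ)
    {L : List ℕ} (hL : L ≠ []) :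
    ∃ S y, S ++ [y] <+: L ∧ cascadeRevenue α β θ A L ≤ g α β (insert y (A ∪ S.toFinset)) := by
  induction L generalizing A with
  | nil => exact absurd rfl hL
  | cons s L ih =>
    rcases eq_or_ne L [] with rfl | hL'
    · refine ⟨[], s, List.prefix_rfl, le_of_eq ?_⟩
      simp only [cascadeRevenue, List.toFinset_nil, union_empty]
      ring
    obtain ⟨S, y, hpre, hle⟩ := ih (insert s A) hL'
    have hmix : cascadeRevenue α β θ A (s :: L)
        ≤ max (g α β (insert s A)) (g α β (insert y (insert s A ∪ S.toFinset))) := by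
      rw [cascadeRevenue]
      have h₀ := (hθ s).1
      have h₁ : 0 ≤ 1 - θ s := sub_nonneg.mpr (hθ s).2
      nlinarith [le_max_left (g α β (insert s A)) (g α β (insert y (insert s A ∪ S.toFinset))),
        le_max_right (g α β (insert s A)) (g α β (insert y (insert s A ∪ S.toFinset)))]
    rcases le_total (g α β (insert s A)) (g α β (insert y (insert s A ∪ S.toFinset))) with h | h
    · refine ⟨s :: S, y, List.cons_prefix_cons.mpr ⟨rfl, hpre⟩, ?_⟩
      rw [List.toFinset_cons, union_insert, ← insert_union]
      exact hmix.trans (max_eq_right h).le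
    · refine ⟨[], s, List.cons_prefix_cons.mpr ⟨rfl, List.nil_prefix⟩, ?_⟩
      rw [List.toFinset_nil, union_empty]
      exact hmix.trans (max_eq_left h).le

end CascadeBounds

lemma exists_split_at_threshold (θ : ℕ → ℝ) {ρ c : ℝ} (hρc : ρ ≤ c) {L : List ℕ}
    (hL : L ≠ []) :
    ∃ L₁ L₂, L = L₁ ++ L₂ ∧ L₁ ≠ [] ∧ ρ ≤ c * (L₁.dropLast.map θ).prod ∧
      (L₂ = [] ∨ c * (L₁.map θ).prod < ρ) := by
  induction L generalizing c with
  | nil => exact absurd rfl hL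
  | cons s L ih =>
    rcases eq_or_ne L [] with rfl | hL'
    · exact ⟨[s], [], rfl, List.cons_ne_nil _ _, by simpa using hρc, Or.inl rfl⟩
    by_cases hs : c * θ s < ρ
    · exact ⟨[s], L, rfl, List.cons_ne_nil _ _, by simpa using hρc, Or.inr (by simpa using hs)⟩
    obtain ⟨L₁, L₂, rfl, hL₁, hle, hlt⟩ := ih (not_lt.mp hs) hL'
    refine ⟨s :: L₁, L₂, rfl, List.cons_ne_nil _ _, ?_, ?_⟩
    · rwa [List.dropLast_cons_of_ne_nil hL₁, List.map_cons, List.prod_cons, ← mul_assoc]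
    · rwa [List.map_cons, List.prod_cons, ← mul_assoc]

lemma prod_map_dropLast_le {θ : ℕ → ℝ} (hθ : ∀ i, 0 ≤ θ i ∧ θ i ≤ 1) {S L : List ℕ} {y : ℕ}
    (h : S ++ [y] <+: L) : (L.dropLast.map θ).prod ≤ (S.map θ).prod := by
  obtain ⟨R, rfl⟩ := h
  rw [List.append_assoc, List.singleton_append, List.dropLast_append_of_ne_nil
    (List.cons_ne_nil _ _), List.map_append, List.prod_append]
  have hle : ((y :: R).dropLast.map θ).prod ≤ 1 := by
    refine (List.prod_map_le_prod_map₀ θ (fun _ => 1) (fun i _ => (hθ i).1)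
      fun i _ => (hθ i).2).trans ?_
    simp
  exact mul_le_of_le_one_right (List.prod_nonneg (List.forall_mem_map.mpr fun i _ => (hθ i).1)) hle

theorem stmt7_general (α β θ : ℕ → ℝ) (hα : ∀ i, 0 ≤ α i) (hβ : ∀ i, 0 ≤ β i)
    (hθ : ∀ i, 0 ≤ θ i ∧ θ i ≤ 1)
    (B : ℕ) (ρ : ℝ) (hρ0 : 0 ≤ ρ) (hρ1 : ρ ≤ 1)
    (O : List ℕ) (hO : O.Nodup) (hOB : O.length ≤ B)
    (hopt : ∀ L : List ℕ, L.Nodup → L.length ≤ B → f α β θ L ≤ f α β θ O)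
    (hfO : 0 < f α β θ O) :
    ∃ (S : Finset ℕ) (y : ℕ), y ∉ S ∧ ρ ≤ ∏ i ∈ S, θ i ∧ S.card < B ∧
      (1 - ρ) * f α β θ O ≤ g α β (insert y S) := by
  have hO₀ : O ≠ [] := by rintro rfl; simp [f, reach, g] at hfO
  obtain ⟨L₁, L₂, rfl, hL₁, hρL₁, hL₂⟩ := exists_split_at_threshold θ hρ1 hO₀
  rw [one_mul] at hρL₁ hL₂
  have htail : (L₁.map θ).prod * f α β θ L₂ ≤ ρ * f α β θ (L₁ ++ L₂) := by
    rcases hL₂ with rfl | hlt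
    · simpa [f, reach, g] using mul_nonneg hρ0 hfO.le
    have hL₂le := hopt L₂ (hO.sublist (List.sublist_append_right _ _)) (by simp at hOB; omega)
    calc (L₁.map θ).prod * f α β θ L₂ ≤ (L₁.map θ).prod * f α β θ (L₁ ++ L₂) :=
          mul_le_mul_of_nonneg_left hL₂le
            (List.prod_nonneg (List.forall_mem_map.mpr fun i _ => (hθ i).1))
      _ ≤ ρ * f α β θ (L₁ ++ L₂) := mul_le_mul_of_nonneg_right hlt.le hfO.le
  have hsplit := cascadeRevenue_append_le hα hβ hθ ∅ L₁ L₂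
  obtain ⟨S, y, hpre, hle⟩ := exists_prefix_cascadeRevenue_le (α := α) (β := β) hθ ∅ hL₁
  simp only [← f_eq_cascadeRevenue, empty_union] at hsplit hle
  have hSy : (S ++ [y]).Nodup := hO.sublist (hpre.sublist.trans (List.sublist_append_left _ _))
  have hS : S.Nodup := hSy.sublist (List.sublist_append_left _ _)
  refine ⟨S.toFinset, y, ?_, ?_, ?_, by linarith⟩
  · simpa using (List.nodup_cons.mp (List.nodup_append_comm.mp hSy)).1
  · rw [List.prod_toFinset θ hS]
    exact hρL₁.trans (prod_map_dropLast_le hθ hpre)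
  · have := hpre.length_le
    simp only [List.length_append, List.length_singleton] at this hOB
    rw [List.toFinset_card_of_nodup hS]
    omega

/-- Lemma 4 / "Lemma 13": there is a pair `(𝒮, y)` feasible for
problem P.A.1 with `g(𝒮 ∪ {y}) ≥ (1 - ρ) f(O)`. -/
theorem stmt7 (α β θ : ℕ → ℝ) (hα : ∀ i, 0 ≤ α i) (hβ : ∀ i, 0 ≤ β i)
    (hθ : ∀ i, 0 ≤ θ i ∧ θ i ≤ 1)
    (B : ℕ) (hB : 1 ≤ B) (ρ : ℝ) (hρ0 : 0 ≤ ρ) (hρ1 : ρ ≤ 1)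
    (O : List ℕ) (hO : O.Nodup) (hOB : O.length ≤ B)
    (hopt : ∀ L : List ℕ, L.Nodup → L.length ≤ B → f α β θ L ≤ f α β θ O)
    (hfO : 0 < f α β θ O) :
    ∃ (S : Finset ℕ) (y : ℕ), y ∉ S ∧ ρ ≤ ∏ i ∈ S, θ i ∧ S.card < B ∧
      (1 - ρ) * f α β θ O ≤ g α β (insert y S) :=
  stmt7_general α β θ hα hβ hθ B ρ hρ0 hρ1 O hO hOB hopt hfO
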